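/- arXiv:1506.08338 — 2 statements merged into one kernel-verified Lean document; each statement's English description precedes it below -/
import Mathlib

section
/- Let F : ℝⁿ → ℝᵐ, let [x̲,x̄] ⊆ ℝⁿ be a box and 𝐅 = [F̲,F̄] ⊆ ℝᵐ a box (possibly with infinite endpoints). Define Y(y,z) = inf_{F̃ ∈ 𝐅} yᵀ(F̃ − F(z)), suppose Z(y,z,w,x̲,x̄) ≥ sup_{x ∈ [x̲,x̄]} yᵀ(F(x) − F(z)), let T be a positive function, and define f = (Z − max(0, Y))/T. If there exist y ∈ ℝᵐ, z with x̲ ≤ z ≤ x̄, and w with f(y,z,w,x̲,x̄) < 0, then there is no x ∈ [x̲,x̄] with F(x) ∈ 𝐅. -/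
/-!
Evaluating the bound `Z` at `x = z` shows `0 ≤ Z`, so a negative `f` forces `0 < Y` and `Z < Y`.
A positive `sInf` in `ℝ` is a genuine infimum (an unbounded set would have `sInf = 0`), so for a
feasible `x` the value `yᵀ(F(x) − F(z))`, which lies in the set defining `Y`, satisfies
`Y ≤ yᵀ(F(x) − F(z)) ≤ Z < Y`.
-/

theorem Real.sInf_le_of_pos {s : Set ℝ} {a : ℝ} (hs : 0 < sInf s) (ha : a ∈ s) :
    sInf s ≤ a := by
  by_cases hb : BddBelow s
  · exact csInf_le hb ha
  · rw [Real.sInf_of_not_bddBelow hb] at hs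
    exact absurd hs (lt_irrefl 0)

theorem lt_of_sub_max_zero_div_neg {a b t : ℝ} (ha : 0 ≤ a) (ht : 0 < t)
    (h : (a - max 0 b) / t < 0) : a < b := by
  have hab : a < max 0 b := sub_neg.mp (neg_of_div_neg_left h ht.le)
  rcases lt_max_iff.mp hab with ha' | hb
  · exact absurd ha (not_le.mpr ha')
  · exact hb

/-- the certificate-of-infeasibility theorem. With
`Y(y,z) = inf_{F̃ ∈ 𝐅} yᵀ(F̃ − F(z))`, `Z` dominating `sup_{x ∈ [x̲,x̄]} yᵀ(F(x) − F(z))`,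
`T > 0` and `f = (Z − max(0,Y))/T`: if `f(y,z,w,x̲,x̄) < 0` for some `y`, `z ∈ [x̲,x̄]`, `w`,
then no `x ∈ [x̲,x̄]` satisfies `F(x) ∈ 𝐅`. -/
theorem certificate_of_infeasibility (n m k : ℕ)
    (F : (Fin n → ℝ) → Fin m → ℝ) (xlo xhi : Fin n → ℝ)
    (Flo Fhi : Fin m → EReal)
    (Z T : (Fin m → ℝ) → (Fin n → ℝ) → (Fin k → ℝ) → (Fin n → ℝ) → (Fin n → ℝ) → ℝ)
    (hT : ∀ y z w, 0 < T y z w xlo xhi)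
    (hZ : ∀ (y : Fin m → ℝ) (z : Fin n → ℝ) (w : Fin k → ℝ) (x : Fin n → ℝ),
      (∀ i, xlo i ≤ x i ∧ x i ≤ xhi i) →
      ∑ j, y j * (F x j - F z j) ≤ Z y z w xlo xhi)
    (y : Fin m → ℝ) (z : Fin n → ℝ) (w : Fin k → ℝ)
    (hz : ∀ i, xlo i ≤ z i ∧ z i ≤ xhi i)
    (hf : (Z y z w xlo xhi -
        max 0 (sInf {t : ℝ | ∃ Ft : Fin m → ℝ,
          (∀ j, Flo j ≤ (Ft j : EReal) ∧ (Ft j : EReal) ≤ Fhi j) ∧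
          t = ∑ j, y j * (Ft j - F z j)})) / T y z w xlo xhi < 0) :
    ¬ ∃ x : Fin n → ℝ, (∀ i, xlo i ≤ x i ∧ x i ≤ xhi i) ∧
      (∀ j, Flo j ≤ (F x j : EReal) ∧ (F x j : EReal) ≤ Fhi j) := by
  rintro ⟨x, hx, hFx⟩
  have hZ_nonneg : 0 ≤ Z y z w xlo xhi := by simpa using hZ y z w z hz
  have hZ_lt_Y := lt_of_sub_max_zero_div_neg hZ_nonneg (hT y z w) hf
  have hY_le := Real.sInf_le_of_pos (hZ_nonneg.trans_lt hZ_lt_Y) ⟨F x, hFx, rfl⟩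
  linarith [hZ y z w x hx]
end

section
/- Let Fₖ(x) = cₖᵀx + xᵀCₖx, and with the notation C(y), c(y,z), A(y,R,S) = C(y) + RᵀR + Sᵀ − S: for all x, z ∈ ℝⁿ, y ∈ ℝᵐ, R, S ∈ ℝⁿˣⁿ, yᵀ(F(x) − F(z)) ≤ (c(y,z)ᵀ + (x − z)ᵀA(y,R,S))(x − z). Consequently Z(y,z,R,S,x̲,x̄) := sup_{x ∈ [x̲,x̄]} (c(y,z)ᵀ + (x − z)ᵀA(y,R,S))(x − z) satisfies the inclusion property Z ≥ sup_{x ∈ [x̲,x̄]} yᵀ(F(x) − F(z)). -/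
open Matrix

/-- `C(y) = Σₖ yₖ Cₖ`. -/
def Cagg {n m : ℕ} (Cm : Fin m → Matrix (Fin n) (Fin n) ℝ) (y : Fin m → ℝ) :
    Matrix (Fin n) (Fin n) ℝ :=
  ∑ k, y k • Cm k

/-- `c(y,z) = Σₖ yₖ cₖ + (C(y) + C(y)ᵀ) z`. -/
def cagg {n m : ℕ} (Cm : Fin m → Matrix (Fin n) (Fin n) ℝ) (cv : Fin m → Fin n → ℝ)
    (y : Fin m → ℝ) (z : Fin n → ℝ) : Fin n → ℝ :=
  (∑ k, y k • cv k) + (Cagg Cm y + (Cagg Cm y)ᵀ) *ᵥ z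

/-- `A(y,R,S) = C(y) + RᵀR + Sᵀ − S`. -/
def Amat {n m : ℕ} (Cm : Fin m → Matrix (Fin n) (Fin n) ℝ) (y : Fin m → ℝ)
    (R S : Matrix (Fin n) (Fin n) ℝ) : Matrix (Fin n) (Fin n) ℝ :=
  Cagg Cm y + Rᵀ * R + Sᵀ - S

/-!
Writing `d = x − z`, the aggregated increment `Σₖ yₖ (Fₖ(x) − Fₖ(z))` is exactly
`c(y,z)ᵀd + dᵀC(y)d`, the Taylor expansion of the aggregated quadratic `Σₖ yₖ Fₖ` at `z`.
Passing from `C(y)` to `A(y,R,S)` adds `dᵀRᵀRd = ‖Rd‖² ≥ 0` and `dᵀ(Sᵀ − S)d = 0`, so the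
right-hand side can only grow. The supremum statement follows because the bound is a
continuous function of `x`, hence bounded above on the compact box `[x̲, x̄]`.
-/

section QuadraticForm

variable {ι α : Type*} [Fintype ι]

theorem dotProduct_mulVec_sub_transpose_self [CommRing α] (S : Matrix ι ι α) (d : ι → α) :
    d ⬝ᵥ ((Sᵀ - S) *ᵥ d) = 0 := by
  rw [sub_mulVec, dotProduct_sub, mulVec_transpose, dotProduct_comm, ← dotProduct_mulVec,
    sub_self]

theorem dotProduct_transpose_mul_self_mulVec [CommRing α] (R : Matrix ι ι α) (d : ι → α) :
    d ⬝ᵥ ((Rᵀ * R) *ᵥ d) = (R *ᵥ d) ⬝ᵥ (R *ᵥ d) := by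
  rw [← mulVec_mulVec, dotProduct_mulVec, vecMul_transpose]

theorem dotProduct_mulVec_le_add_transpose_mul_self_add_sub [CommRing α] [LinearOrder α]
    [IsStrictOrderedRing α] (M R S : Matrix ι ι α) (d : ι → α) :
    d ⬝ᵥ (M *ᵥ d) ≤ d ⬝ᵥ ((M + Rᵀ * R + Sᵀ - S) *ᵥ d) := by
  rw [add_sub_assoc, add_mulVec, add_mulVec, dotProduct_add, dotProduct_add,
    dotProduct_transpose_mul_self_mulVec, dotProduct_mulVec_sub_transpose_self, add_zero,
    le_add_iff_nonneg_right]
  exact Fintype.sum_nonneg fun i => mul_self_nonneg _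

theorem quadratic_sub_quadratic [CommRing α] (c : ι → α) (M : Matrix ι ι α) (x z : ι → α) :
    (c ⬝ᵥ x + x ⬝ᵥ (M *ᵥ x)) - (c ⬝ᵥ z + z ⬝ᵥ (M *ᵥ z)) =
      (c + (M + Mᵀ) *ᵥ z) ⬝ᵥ (x - z) + (x - z) ⬝ᵥ (M *ᵥ (x - z)) := by
  obtain ⟨d, rfl⟩ : ∃ d, x = z + d := ⟨x - z, by abel⟩
  rw [add_sub_cancel_left]
  simp only [mulVec_add, dotProduct_add, add_dotProduct, add_mulVec, mulVec_transpose,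
    dotProduct_mulVec z M d]
  rw [dotProduct_comm (z ᵥ* M) d, dotProduct_comm (M *ᵥ z) d]
  ring

theorem sum_mul_quadratic [CommRing α] {κ : Type*} [Fintype κ] (y : κ → α) (c : κ → ι → α)
    (M : κ → Matrix ι ι α) (x : ι → α) :
    ∑ k, y k * (c k ⬝ᵥ x + x ⬝ᵥ (M k *ᵥ x)) =
      (∑ k, y k • c k) ⬝ᵥ x + x ⬝ᵥ ((∑ k, y k • M k) *ᵥ x) := by
  simp only [sum_dotProduct, sum_mulVec, dotProduct_sum, smul_mulVec, smul_dotProduct,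
    dotProduct_smul, smul_eq_mul, mul_add, Finset.sum_add_distrib]

end QuadraticForm

theorem sum_mul_sub_eq_cagg {n m : ℕ} (Cm : Fin m → Matrix (Fin n) (Fin n) ℝ)
    (cv : Fin m → Fin n → ℝ) (x z : Fin n → ℝ) (y : Fin m → ℝ) :
    ∑ k, y k * ((cv k ⬝ᵥ x + x ⬝ᵥ (Cm k *ᵥ x)) - (cv k ⬝ᵥ z + z ⬝ᵥ (Cm k *ᵥ z))) =
      cagg Cm cv y z ⬝ᵥ (x - z) + (x - z) ⬝ᵥ (Cagg Cm y *ᵥ (x - z)) := by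
  simp only [mul_sub, Finset.sum_sub_distrib, sum_mul_quadratic]
  exact quadratic_sub_quadratic _ _ x z

theorem sum_mul_sub_le_cagg_add_Amat {n m : ℕ} (Cm : Fin m → Matrix (Fin n) (Fin n) ℝ)
    (cv : Fin m → Fin n → ℝ) (x z : Fin n → ℝ) (y : Fin m → ℝ) (R S : Matrix (Fin n) (Fin n) ℝ) :
    ∑ k, y k * ((cv k ⬝ᵥ x + x ⬝ᵥ (Cm k *ᵥ x)) - (cv k ⬝ᵥ z + z ⬝ᵥ (Cm k *ᵥ z))) ≤
      cagg Cm cv y z ⬝ᵥ (x - z) + (x - z) ⬝ᵥ (Amat Cm y R S *ᵥ (x - z)) := by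
  rw [sum_mul_sub_eq_cagg]
  exact add_le_add_right (dotProduct_mulVec_le_add_transpose_mul_self_add_sub _ R S _) _

/-- for the quadratic system `Fₖ(x) = cₖᵀx + xᵀCₖx`,
`yᵀ(F(x) − F(z)) ≤ (c(y,z)ᵀ + (x − z)ᵀA(y,R,S))(x − z)` for all `x, z, y, R, S`;
consequently `Z := sup_{x ∈ [x̲,x̄]} (c(y,z)ᵀ + (x − z)ᵀA(y,R,S))(x − z)` satisfies the
inclusion property `Z ≥ sup_{x ∈ [x̲,x̄]} yᵀ(F(x) − F(z))`. -/
theorem quadratic_certificate_bound (n m : ℕ)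
    (Cm : Fin m → Matrix (Fin n) (Fin n) ℝ) (cv : Fin m → Fin n → ℝ) :
    (∀ (x z : Fin n → ℝ) (y : Fin m → ℝ) (R S : Matrix (Fin n) (Fin n) ℝ),
      ∑ k, y k * ((cv k ⬝ᵥ x + x ⬝ᵥ (Cm k *ᵥ x)) - (cv k ⬝ᵥ z + z ⬝ᵥ (Cm k *ᵥ z))) ≤
        cagg Cm cv y z ⬝ᵥ (x - z) + (x - z) ⬝ᵥ (Amat Cm y R S *ᵥ (x - z))) ∧
    ∀ (z : Fin n → ℝ) (y : Fin m → ℝ) (R S : Matrix (Fin n) (Fin n) ℝ)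
      (xlo xhi : Fin n → ℝ) (x : Fin n → ℝ), (∀ i, xlo i ≤ x i ∧ x i ≤ xhi i) →
      ∑ k, y k * ((cv k ⬝ᵥ x + x ⬝ᵥ (Cm k *ᵥ x)) - (cv k ⬝ᵥ z + z ⬝ᵥ (Cm k *ᵥ z))) ≤
        sSup {t : ℝ | ∃ x' : Fin n → ℝ, (∀ i, xlo i ≤ x' i ∧ x' i ≤ xhi i) ∧
          t = cagg Cm cv y z ⬝ᵥ (x' - z) + (x' - z) ⬝ᵥ (Amat Cm y R S *ᵥ (x' - z))} := by
  refine ⟨sum_mul_sub_le_cagg_add_Amat Cm cv, fun z y R S xlo xhi x hx => ?_⟩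
  set f : (Fin n → ℝ) → ℝ := fun x' =>
    cagg Cm cv y z ⬝ᵥ (x' - z) + (x' - z) ⬝ᵥ (Amat Cm y R S *ᵥ (x' - z))
  have hf : Continuous f := by fun_prop
  have box_image : {t : ℝ | ∃ x' : Fin n → ℝ, (∀ i, xlo i ≤ x' i ∧ x' i ≤ xhi i) ∧ t = f x'} =
      f '' Set.Icc xlo xhi := by
    ext t
    simp only [Set.mem_ofPred_eq, Set.mem_image, Set.mem_Icc, Pi.le_def, forall_and, eq_comm]
  rw [box_image]
  exact (sum_mul_sub_le_cagg_add_Amat Cm cv x z y R S).trans <|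
    le_csSup (isCompact_Icc.image hf).bddAbove ⟨x, ⟨fun i => (hx i).1, fun i => (hx i).2⟩, rfl⟩
end
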